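/- Let N = 3 and θ = (0, π/4, π/2). Then θ is a critical point of V (all three partial derivatives of V vanish at θ), and the Hessian of V at θ has eigenvalues 0, 2 + √2, and 3 + 3√2; in particular the Hessian is positive semidefinite with one-dimensional kernel spanned by (1,1,1), so θ is a nondegenerate local minimum of V. -/

import Mathlib

open Real Finset Matrix

/-- The limit potential of the (1+N)-vortex problem:
`V(θ) = -∑_{i<j} (cos(θᵢ-θⱼ) + (1/2)·log(2 - 2cos(θᵢ-θⱼ)))`. -/
noncomputable def vortexPotential (N : ℕ) (θ : Fin N → ℝ) : ℝ :=
  - ∑ i : Fin N, ∑ j : Fin N,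
      if i < j then
        Real.cos (θ i - θ j) + (1 / 2) * Real.log (2 - 2 * Real.cos (θ i - θ j))
      else 0

/-- The Hessian matrix of the potential `V` at `θ`. -/
noncomputable def vortexHessian (N : ℕ) (θ : Fin N → ℝ) : Matrix (Fin N) (Fin N) ℝ :=
  fun i j => iteratedFDeriv ℝ 2 (vortexPotential N) θ ![Pi.single i 1, Pi.single j 1]

/-!
The potential is the sum of the pair potential `φ t = -(cos t + log (2 - 2 cos t) / 2)` over the
differences `θᵢ - θⱼ`, so away from collisions its gradient is `∑ φ'(θᵢ - θⱼ) (vᵢ - vⱼ)` and its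
Hessian is the weighted graph Laplacian `∑ φ''(θᵢ - θⱼ) (eᵢ - eⱼ)(eᵢ - eⱼ)ᵀ`. At `(0, π/4, π/2)` the
differences are `-π/4, -π/2, -π/4`; there `φ'` takes the values `1/2, -1/2, 1/2`, which cancel, and
`φ''` gives the isosceles weights `1 + √2, 1/2, 1 + √2`. The Laplacian of a triangle with weights
`a, b, a` has the eigenvectors `(1,1,1)`, `(1,0,-1)`, `(1,-2,1)` with eigenvalues `0`, `a + 2b`, `3a`,
and its quadratic form `∑ wᵢⱼ (vᵢ - vⱼ)²` gives semidefiniteness and the kernel.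
-/

open Topology

def triangleLaplacian (a b c : ℝ) : Matrix (Fin 3) (Fin 3) ℝ :=
  !![a + b, -a, -b; -a, a + c, -c; -b, -c, b + c]

lemma triangleLaplacian_mulVec (a b c : ℝ) (v : Fin 3 → ℝ) :
    triangleLaplacian a b c *ᵥ v =
      ![a * (v 0 - v 1) + b * (v 0 - v 2), a * (v 1 - v 0) + c * (v 1 - v 2),
        b * (v 2 - v 0) + c * (v 2 - v 1)] := by
  ext i
  fin_cases i <;>
    simp only [triangleLaplacian, mulVec, of_apply, vec3_dotProduct, Fin.zero_eta, Fin.mk_one,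
      Fin.reduceFinMk, cons_val_zero, cons_val_one, cons_val_two, head_cons, tail_cons] <;>
    ring

lemma dotProduct_triangleLaplacian_mulVec (a b c : ℝ) (v : Fin 3 → ℝ) :
    v ⬝ᵥ (triangleLaplacian a b c *ᵥ v) =
      a * (v 0 - v 1) ^ 2 + b * (v 0 - v 2) ^ 2 + c * (v 1 - v 2) ^ 2 := by
  rw [triangleLaplacian_mulVec, vec3_dotProduct]
  simp only [cons_val_zero, cons_val_one, cons_val_two, head_cons, tail_cons]
  ring

lemma triangleLaplacian_posSemidef {a b c : ℝ} (ha : 0 ≤ a) (hb : 0 ≤ b) (hc : 0 ≤ c) :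
    (triangleLaplacian a b c).PosSemidef := by
  refine posSemidef_iff_dotProduct_mulVec.mpr ⟨?_, fun v => ?_⟩
  · ext i j
    fin_cases i <;> fin_cases j <;> simp [triangleLaplacian]
  · simp only [star_trivial, dotProduct_triangleLaplacian_mulVec]
    positivity

lemma triangleLaplacian_mulVec_eq_zero_iff {a b c : ℝ} (ha : 0 < a) (hb : 0 < b) (hc : 0 ≤ c)
    (v : Fin 3 → ℝ) :
    triangleLaplacian a b c *ᵥ v = 0 ↔ ∃ t : ℝ, v = t • ![1, 1, 1] := by
  constructor
  · intro hv
    have hq := dotProduct_triangleLaplacian_mulVec a b c v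
    rw [hv, dotProduct_zero] at hq
    have t01 : 0 ≤ a * (v 0 - v 1) ^ 2 := by positivity
    have t02 : 0 ≤ b * (v 0 - v 2) ^ 2 := by positivity
    have t12 : 0 ≤ c * (v 1 - v 2) ^ 2 := by positivity
    have h01 : a * (v 0 - v 1) ^ 2 = 0 := by linarith
    have h02 : b * (v 0 - v 2) ^ 2 = 0 := by linarith
    simp only [mul_eq_zero, ha.ne', hb.ne', false_or, pow_eq_zero_iff two_ne_zero,
      sub_eq_zero] at h01 h02
    exact ⟨v 0, by ext i; fin_cases i <;> simp [← h01, ← h02]⟩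
  · rintro ⟨t, rfl⟩
    rw [triangleLaplacian_mulVec]
    ext i
    fin_cases i <;> simp

lemma exists_triangleLaplacian_mulVec_eq_smul_iff (a b μ : ℝ) :
    (∃ v : Fin 3 → ℝ, v ≠ 0 ∧ triangleLaplacian a b a *ᵥ v = μ • v) ↔
      μ = 0 ∨ μ = a + 2 * b ∨ μ = 3 * a := by
  constructor
  · rintro ⟨v, hv, heig⟩
    rw [triangleLaplacian_mulVec] at heig
    have h0 := congrFun heig 0
    have h1 := congrFun heig 1
    have h2 := congrFun heig 2
    simp only [cons_val_zero, cons_val_one, cons_val_two, head_cons, tail_cons, Pi.smul_apply,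
      smul_eq_mul] at h0 h1 h2
    -- the components of `v` along the eigenvectors `(1,1,1)`, `(1,0,-1)`, `(1,-2,1)`
    have hsum : μ * (v 0 + v 1 + v 2) = 0 := by linear_combination -(h0 + h1 + h2)
    have hodd : (a + 2 * b - μ) * (v 0 - v 2) = 0 := by linear_combination h0 - h2
    have heven : (3 * a - μ) * (v 0 - 2 * v 1 + v 2) = 0 := by
      linear_combination h0 - 2 * h1 + h2
    by_contra! hμ
    obtain ⟨hμ₀, hμ₁, hμ₂⟩ := hμ
    have hs := (mul_eq_zero.mp hsum).resolve_left hμ₀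
    have hd := (mul_eq_zero.mp hodd).resolve_left (sub_ne_zero.mpr hμ₁.symm)
    have he := (mul_eq_zero.mp heven).resolve_left (sub_ne_zero.mpr hμ₂.symm)
    exact hv (by ext i; fin_cases i <;> simp <;> linarith)
  · rintro (rfl | rfl | rfl)
    · refine ⟨![1, 1, 1], ne_of_apply_ne (· 0) (by simp), ?_⟩
      rw [triangleLaplacian_mulVec]; ext i; fin_cases i <;> simp
    · refine ⟨![1, 0, -1], ne_of_apply_ne (· 0) (by simp), ?_⟩
      rw [triangleLaplacian_mulVec]; ext i; fin_cases i <;> simp <;> ring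
    · refine ⟨![1, -2, 1], ne_of_apply_ne (· 0) (by simp), ?_⟩
      rw [triangleLaplacian_mulVec]; ext i; fin_cases i <;> simp <;> ring

namespace Vortex

noncomputable def pairPotential (t : ℝ) : ℝ := -(cos t + 1 / 2 * log (2 - 2 * cos t))

noncomputable def pairPotentialDeriv (t : ℝ) : ℝ := sin t - sin t / (2 - 2 * cos t)

noncomputable def pairPotentialDeriv2 (t : ℝ) : ℝ := cos t + 1 / (2 - 2 * cos t)

lemma two_sub_two_mul_cos_pos {t : ℝ} (h : cos t ≠ 1) : 0 < 2 - 2 * cos t := by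
  linarith [(cos_le_one t).lt_of_ne h]

lemma hasDerivAt_two_sub_two_mul_cos (t : ℝ) :
    HasDerivAt (fun t => 2 - 2 * cos t) (2 * sin t) t := by
  simpa using ((hasDerivAt_cos t).const_mul 2).const_sub 2

lemma hasDerivAt_pairPotential {t : ℝ} (h : cos t ≠ 1) :
    HasDerivAt pairPotential (pairPotentialDeriv t) t := by
  have hpos := two_sub_two_mul_cos_pos h
  have hlog := (hasDerivAt_two_sub_two_mul_cos t).log hpos.ne'
  refine (((hasDerivAt_cos t).add (hlog.const_mul (1 / 2))).neg).congr_deriv ?_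
  simp only [pairPotentialDeriv]
  field_simp
  ring

lemma hasDerivAt_pairPotentialDeriv {t : ℝ} (h : cos t ≠ 1) :
    HasDerivAt pairPotentialDeriv (pairPotentialDeriv2 t) t := by
  have hpos := two_sub_two_mul_cos_pos h
  refine ((hasDerivAt_sin t).sub
    ((hasDerivAt_sin t).div (hasDerivAt_two_sub_two_mul_cos t) hpos.ne')).congr_deriv ?_
  simp only [pairPotentialDeriv2]
  field_simp
  linear_combination sin_sq_add_cos_sq t

def orderedPairs (N : ℕ) : Finset (Fin N × Fin N) := {p | p.1 < p.2}

lemma vortexPotential_eq_sum (N : ℕ) (θ : Fin N → ℝ) :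
    vortexPotential N θ = ∑ p ∈ orderedPairs N, pairPotential (θ p.1 - θ p.2) := by
  rw [orderedPairs, Finset.sum_filter, ← Finset.univ_product_univ, Finset.sum_product,
    vortexPotential, ← Finset.sum_neg_distrib]
  refine Finset.sum_congr rfl fun i _ => ?_
  rw [← Finset.sum_neg_distrib]
  refine Finset.sum_congr rfl fun j _ => ?_
  split_ifs <;> simp [pairPotential]

def collisionFree (N : ℕ) : Set (Fin N → ℝ) :=
  {θ | ∀ p ∈ orderedPairs N, cos (θ p.1 - θ p.2) ≠ 1}

lemma isOpen_collisionFree (N : ℕ) : IsOpen (collisionFree N) := by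
  have : collisionFree N = ⋂ p ∈ orderedPairs N, {θ | cos (θ p.1 - θ p.2) ≠ 1} := by
    ext θ; simp [collisionFree]
  rw [this]
  exact isOpen_biInter_finset fun p _ =>
    isOpen_ne.preimage (by fun_prop)

noncomputable def coordDiff {N : ℕ} (i j : Fin N) : (Fin N → ℝ) →L[ℝ] ℝ :=
  ContinuousLinearMap.proj (R := ℝ) (φ := fun _ : Fin N => ℝ) i
    - ContinuousLinearMap.proj (R := ℝ) (φ := fun _ : Fin N => ℝ) j

@[simp] lemma coordDiff_apply {N : ℕ} (i j : Fin N) (v : Fin N → ℝ) :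
    coordDiff i j v = v i - v j := rfl

noncomputable def vortexGradient (N : ℕ) (θ : Fin N → ℝ) : (Fin N → ℝ) →L[ℝ] ℝ :=
  ∑ p ∈ orderedPairs N, pairPotentialDeriv (θ p.1 - θ p.2) • coordDiff p.1 p.2

noncomputable def vortexHessianForm (N : ℕ) (θ : Fin N → ℝ) :
    (Fin N → ℝ) →L[ℝ] (Fin N → ℝ) →L[ℝ] ℝ :=
  ∑ p ∈ orderedPairs N,
    (pairPotentialDeriv2 (θ p.1 - θ p.2) • coordDiff p.1 p.2).smulRight (coordDiff p.1 p.2)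

lemma hasFDerivAt_comp_coordDiff {N : ℕ} {f : ℝ → ℝ} {f' : ℝ} {θ : Fin N → ℝ} {i j : Fin N}
    (hf : HasDerivAt f f' (θ i - θ j)) :
    HasFDerivAt (fun θ : Fin N → ℝ => f (θ i - θ j)) (f' • coordDiff i j) θ :=
  hf.comp_hasFDerivAt (h₂ := f) θ (coordDiff i j).hasFDerivAt

lemma hasFDerivAt_vortexPotential {N : ℕ} {θ : Fin N → ℝ} (hθ : θ ∈ collisionFree N) :
    HasFDerivAt (vortexPotential N) (vortexGradient N θ) θ := by
  rw [show vortexPotential N = _ from funext (vortexPotential_eq_sum N), vortexGradient]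
  exact HasFDerivAt.fun_sum fun p hp =>
    hasFDerivAt_comp_coordDiff (hasDerivAt_pairPotential (hθ p hp))

lemma hasFDerivAt_vortexGradient {N : ℕ} {θ : Fin N → ℝ} (hθ : θ ∈ collisionFree N) :
    HasFDerivAt (vortexGradient N) (vortexHessianForm N θ) θ := by
  unfold vortexGradient
  exact HasFDerivAt.fun_sum fun p hp =>
    (hasFDerivAt_comp_coordDiff (hasDerivAt_pairPotentialDeriv (hθ p hp))).smul_const
      (coordDiff p.1 p.2)

lemma fderiv_vortexPotential_apply {N : ℕ} {θ : Fin N → ℝ} (hθ : θ ∈ collisionFree N)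
    (v : Fin N → ℝ) :
    fderiv ℝ (vortexPotential N) θ v =
      ∑ p ∈ orderedPairs N, pairPotentialDeriv (θ p.1 - θ p.2) * (v p.1 - v p.2) := by
  simp [(hasFDerivAt_vortexPotential hθ).fderiv, vortexGradient]

lemma vortexHessian_apply {N : ℕ} {θ : Fin N → ℝ} (hθ : θ ∈ collisionFree N) (i j : Fin N) :
    vortexHessian N θ i j = vortexHessianForm N θ (Pi.single i 1) (Pi.single j 1) := by
  have hgrad : fderiv ℝ (vortexPotential N) =ᶠ[𝓝 θ] vortexGradient N := by
    filter_upwards [(isOpen_collisionFree N).mem_nhds hθ] with θ' hθ'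
    exact (hasFDerivAt_vortexPotential hθ').fderiv
  rw [vortexHessian, iteratedFDeriv_two_apply, hgrad.fderiv_eq,
    (hasFDerivAt_vortexGradient hθ).fderiv]
  simp only [Matrix.cons_val_zero, Matrix.cons_val_one]

lemma orderedPairs_three : orderedPairs 3 = {(0, 1), (0, 2), (1, 2)} := by decide

lemma mem_collisionFree_three {θ : Fin 3 → ℝ} :
    θ ∈ collisionFree 3 ↔
      cos (θ 0 - θ 1) ≠ 1 ∧ cos (θ 0 - θ 2) ≠ 1 ∧ cos (θ 1 - θ 2) ≠ 1 := by
  simp [collisionFree, orderedPairs_three]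

lemma fderiv_vortexPotential_three_apply {θ : Fin 3 → ℝ} (hθ : θ ∈ collisionFree 3)
    (v : Fin 3 → ℝ) :
    fderiv ℝ (vortexPotential 3) θ v =
      pairPotentialDeriv (θ 0 - θ 1) * (v 0 - v 1) + pairPotentialDeriv (θ 0 - θ 2) * (v 0 - v 2)
        + pairPotentialDeriv (θ 1 - θ 2) * (v 1 - v 2) := by
  simp [fderiv_vortexPotential_apply hθ, orderedPairs_three, add_assoc]

lemma vortexHessian_three {θ : Fin 3 → ℝ} (hθ : θ ∈ collisionFree 3) :
    vortexHessian 3 θ = triangleLaplacian (pairPotentialDeriv2 (θ 0 - θ 1))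
      (pairPotentialDeriv2 (θ 0 - θ 2)) (pairPotentialDeriv2 (θ 1 - θ 2)) := by
  ext i j
  rw [vortexHessian_apply hθ]
  fin_cases i <;> fin_cases j <;>
    simp [vortexHessianForm, orderedPairs_three, triangleLaplacian]

lemma two_sub_sqrt_two_ne_zero : (2 : ℝ) - √2 ≠ 0 := by
  linarith [sqrt_two_lt_three_halves]

lemma pairPotentialDeriv_neg_pi_div_four : pairPotentialDeriv (-(π / 4)) = 1 / 2 := by
  have := two_sub_sqrt_two_ne_zero
  simp only [pairPotentialDeriv, sin_neg, cos_neg, sin_pi_div_four, cos_pi_div_four]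
  field_simp
  linear_combination sq_sqrt (zero_le_two (α := ℝ))

lemma pairPotentialDeriv_neg_pi_div_two : pairPotentialDeriv (-(π / 2)) = -(1 / 2) := by
  norm_num [pairPotentialDeriv]

lemma pairPotentialDeriv2_neg_pi_div_four : pairPotentialDeriv2 (-(π / 4)) = 1 + √2 := by
  have := two_sub_sqrt_two_ne_zero
  simp only [pairPotentialDeriv2, cos_neg, cos_pi_div_four]
  field_simp
  linear_combination sq_sqrt (zero_le_two (α := ℝ))

lemma pairPotentialDeriv2_neg_pi_div_two : pairPotentialDeriv2 (-(π / 2)) = 1 / 2 := by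
  norm_num [pairPotentialDeriv2]

local notation "θ₀" => (![0, π / 4, π / 2] : Fin 3 → ℝ)

lemma sub_θ₀ : θ₀ 0 - θ₀ 1 = -(π / 4) ∧ θ₀ 0 - θ₀ 2 = -(π / 2) ∧ θ₀ 1 - θ₀ 2 = -(π / 4) := by
  simp only [cons_val_zero, cons_val_one, cons_val_two, head_cons, tail_cons]
  refine ⟨?_, ?_, ?_⟩ <;> ring

lemma θ₀_mem_collisionFree : θ₀ ∈ collisionFree 3 := by
  obtain ⟨h01, h02, h12⟩ := sub_θ₀
  rw [mem_collisionFree_three, h01, h02, h12, cos_neg, cos_neg, cos_pi_div_four, cos_pi_div_two]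
  refine ⟨?_, zero_ne_one, ?_⟩ <;> linarith [sqrt_two_lt_three_halves]

lemma fderiv_vortexPotential_θ₀ : fderiv ℝ (vortexPotential 3) θ₀ = 0 := by
  ext v
  obtain ⟨h01, h02, h12⟩ := sub_θ₀
  rw [fderiv_vortexPotential_three_apply θ₀_mem_collisionFree, h01, h02, h12,
    pairPotentialDeriv_neg_pi_div_four, pairPotentialDeriv_neg_pi_div_two,
    _root_.zero_apply]
  ring

lemma vortexHessian_θ₀ : vortexHessian 3 θ₀ = triangleLaplacian (1 + √2) (1 / 2) (1 + √2) := by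
  obtain ⟨h01, h02, h12⟩ := sub_θ₀
  rw [vortexHessian_three θ₀_mem_collisionFree, h01, h02, h12,
    pairPotentialDeriv2_neg_pi_div_four, pairPotentialDeriv2_neg_pi_div_two]

end Vortex

/-- For `N = 3`, the point `θ = (0, π/4, π/2)` is a critical point of `V`,
and the Hessian of `V` there has eigenvalues `0`, `2 + √2`, `3 + 3√2`; it is positive
semidefinite with one-dimensional kernel spanned by `(1,1,1)`, so `θ` is a nondegenerate
local minimum of `V`. -/
theorem three_vortex_minimum :
    (∀ j : Fin 3, fderiv ℝ (vortexPotential 3) ![0, π / 4, π / 2] (Pi.single j 1) = 0) ∧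
    (∀ μ : ℝ, (∃ v : Fin 3 → ℝ, v ≠ 0 ∧
        (vortexHessian 3 ![0, π / 4, π / 2]).mulVec v = μ • v) ↔
      (μ = 0 ∨ μ = 2 + Real.sqrt 2 ∨ μ = 3 + 3 * Real.sqrt 2)) ∧
    (vortexHessian 3 ![0, π / 4, π / 2]).PosSemidef ∧
    (∀ v : Fin 3 → ℝ, (vortexHessian 3 ![0, π / 4, π / 2]).mulVec v = 0 ↔
      ∃ c : ℝ, v = c • ![1, 1, 1]) := by
  have hweight : (0 : ℝ) < 1 + √2 := by positivity
  rw [Vortex.vortexHessian_θ₀]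
  refine ⟨fun j => by rw [Vortex.fderiv_vortexPotential_θ₀]; rfl, fun μ => ?_,
    triangleLaplacian_posSemidef hweight.le one_half_pos.le hweight.le,
    triangleLaplacian_mulVec_eq_zero_iff hweight one_half_pos hweight.le⟩
  rw [exists_triangleLaplacian_mulVec_eq_smul_iff, show 1 + √2 + 2 * (1 / 2) = 2 + √2 by ring,
    show 3 * (1 + √2) = 3 + 3 * √2 by ring]
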